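/- arXiv:2412.10396 — 4 statements merged into one kernel-verified Lean document; each statement's English description precedes it below -/
import Mathlib

section
/- (3-Heisenberg-Robertson-Schrödinger uncertainty principle on L³.) Let (Ω, μ) be a measure space, let f : Ω → ℝ lie in L³(Ω, μ) with ∫ f³ dμ = 1, and let φ, ψ, χ : Ω → ℝ be measurable and essentially bounded. Set a := ∫ φ·f³ dμ, b := ∫ ψ·f³ dμ, c := ∫ χ·f³ dμ, and Δ(φ) := ‖φ·f − a·f‖_{L³}, Δ(ψ) := ‖ψ·f − b·f‖_{L³}, Δ(χ) := ‖χ·f − c·f‖_{L³}. Then (1/27)·(Δ(φ) + Δ(ψ) + Δ(χ))³ ≥ Δ(φ)·Δ(ψ)·Δ(χ) ≥ | ∫ (φψχ − a·ψχ − b·φχ − c·φψ)·f³ dμ + 2abc |. -/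
/-!
With `gᵢ := (θᵢ - aᵢ) f` the deviations of the three multipliers, expanding the product shows
`∫ g₁ g₂ g₃ = ∫ (φψχ - aψχ - bφχ - cφψ) f³ + 2abc`, because `∫ θ f³` is linear in `θ` and
`∫ f³ = 1`. The three-function Hölder inequality with exponents `1/3 + 1/3 + 1/3 = 1` bounds
`|∫ g₁ g₂ g₃|` by `Δ(φ) Δ(ψ) Δ(χ)`, and AM-GM for three numbers gives the other inequality.
-/

open MeasureTheory

theorem mul_mul_le_arith_mean_pow_three {x y z : ℝ} (hx : 0 ≤ x) (hy : 0 ≤ y) (hz : 0 ≤ z) :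
    x * y * z ≤ ((x + y + z) / 3) ^ 3 := by
  have hs : 0 ≤ x + y + z := by positivity
  nlinarith [mul_nonneg hs (sq_nonneg (x - y)), mul_nonneg hs (sq_nonneg (y - z)),
    mul_nonneg hs (sq_nonneg (z - x)), mul_nonneg hx (sq_nonneg (y - z)),
    mul_nonneg hy (sq_nonneg (z - x)), mul_nonneg hz (sq_nonneg (x - y))]

namespace MeasureTheory

open ENNReal

variable {α : Type*} [MeasurableSpace α] {μ : Measure α}

section NormedRing

variable {𝕜 : Type*} [NormedRing 𝕜]

theorem eLpNorm_mul_le_mul_eLpNorm {f g : α → 𝕜} (hf : AEStronglyMeasurable f μ)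
    (hg : AEStronglyMeasurable g μ) (p q : ℝ≥0∞) :
    eLpNorm (fun x => f x * g x) (p⁻¹ + q⁻¹)⁻¹ μ ≤ eLpNorm f p μ * eLpNorm g q μ := by
  -- elaborated before meeting the goal: unifying `f • g` with `fun x => f x * g x` up front times out
  have h := eLpNorm_smul_le_mul_eLpNorm (r := (p⁻¹ + q⁻¹)⁻¹) (μ := μ) (hpqr := .of p q) hg hf
  exact h

theorem eLpNorm_mul_mul_le_mul_eLpNorm {f g h : α → 𝕜} (hf : AEStronglyMeasurable f μ)
    (hg : AEStronglyMeasurable g μ) (hh : AEStronglyMeasurable h μ) (p q r : ℝ≥0∞) :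
    eLpNorm (fun x => f x * g x * h x) (p⁻¹ + q⁻¹ + r⁻¹)⁻¹ μ
      ≤ eLpNorm f p μ * eLpNorm g q μ * eLpNorm h r μ :=
  calc eLpNorm (fun x => f x * g x * h x) (p⁻¹ + q⁻¹ + r⁻¹)⁻¹ μ
      ≤ eLpNorm (fun x => f x * g x) (p⁻¹ + q⁻¹)⁻¹ μ * eLpNorm h r μ := by
        simpa only [inv_inv] using
          eLpNorm_mul_le_mul_eLpNorm (f := fun x => f x * g x) (hf.mul hg) hh (p⁻¹ + q⁻¹)⁻¹ r
    _ ≤ eLpNorm f p μ * eLpNorm g q μ * eLpNorm h r μ := by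
        gcongr
        exact eLpNorm_mul_le_mul_eLpNorm hf hg p q

end NormedRing

theorem MemLp.eLpNorm_three_eq {g : α → ℝ} (hg : MemLp g 3 μ) :
    eLpNorm g 3 μ = ENNReal.ofReal ((∫ x, |g x| ^ 3 ∂μ) ^ ((1 : ℝ) / 3)) := by
  rw [hg.eLpNorm_eq_integral_rpow_norm three_ne_zero ofNat_ne_top]
  norm_num [Real.norm_eq_abs]

theorem abs_integral_mul_mul_le {f g h : α → ℝ} (hf : MemLp f 3 μ) (hg : MemLp g 3 μ)
    (hh : MemLp h 3 μ) :
    |∫ x, f x * g x * h x ∂μ| ≤ (∫ x, |f x| ^ 3 ∂μ) ^ ((1 : ℝ) / 3)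
      * (∫ x, |g x| ^ 3 ∂μ) ^ ((1 : ℝ) / 3) * (∫ x, |h x| ^ 3 ∂μ) ^ ((1 : ℝ) / 3) := by
  have hexp : (3⁻¹ + 3⁻¹ + 3⁻¹ : ℝ≥0∞)⁻¹ = 1 := by
    simpa only [one_div, inv_one] using congrArg (·⁻¹) (ENNReal.add_thirds (1 : ℝ≥0∞))
  have hHolder : ‖∫ x, f x * g x * h x ∂μ‖ₑ ≤ eLpNorm f 3 μ * eLpNorm g 3 μ * eLpNorm h 3 μ :=
    calc ‖∫ x, f x * g x * h x ∂μ‖ₑ ≤ ∫⁻ x, ‖f x * g x * h x‖ₑ ∂μ :=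
          enorm_integral_le_lintegral_enorm _
      _ = eLpNorm (fun x => f x * g x * h x) (3⁻¹ + 3⁻¹ + 3⁻¹)⁻¹ μ := by
          rw [hexp, eLpNorm_one_eq_lintegral_enorm]
      _ ≤ eLpNorm f 3 μ * eLpNorm g 3 μ * eLpNorm h 3 μ :=
          eLpNorm_mul_mul_le_mul_eLpNorm hf.1 hg.1 hh.1 3 3 3
  rwa [hf.eLpNorm_three_eq, hg.eLpNorm_three_eq, hh.eLpNorm_three_eq,
    ← ofReal_mul (by positivity), ← ofReal_mul (by positivity), Real.enorm_eq_ofReal_abs,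
    ofReal_le_ofReal_iff (by positivity)] at hHolder

theorem MemLp.integrable_pow_three {f : α → ℝ} (hf : MemLp f 3 μ) :
    Integrable (fun x => f x ^ 3) μ :=
  (integrable_norm_iff (hf.1.pow 3)).1 <| by
    simpa only [Pi.pow_apply, norm_pow] using hf.integrable_norm_pow (p := 3) three_ne_zero

theorem integral_sub_mul_sub_mul_sub_mul {w φ ψ χ : α → ℝ} {a b c : ℝ} (hw : Integrable w μ)
    (hw1 : ∫ x, w x ∂μ = 1) (hφ : MemLp φ ⊤ μ) (hψ : MemLp ψ ⊤ μ) (hχ : MemLp χ ⊤ μ)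
    (ha : ∫ x, φ x * w x ∂μ = a) (hb : ∫ x, ψ x * w x ∂μ = b) (hc : ∫ x, χ x * w x ∂μ = c) :
    ∫ x, (φ x - a) * (ψ x - b) * (χ x - c) * w x ∂μ
      = ∫ x, (φ x * ψ x * χ x - a * (ψ x * χ x) - b * (φ x * χ x) - c * (φ x * ψ x)) * w x ∂μ
        + 2 * a * b * c := by
  have hmul : ∀ θ : α → ℝ, MemLp θ ⊤ μ → Integrable (fun x => θ x * w x) μ :=
    fun θ hθ => hw.mul_of_top_right hθ
  have hφψ : MemLp (fun x => φ x * ψ x) ⊤ μ := hψ.mul' hφ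
  have hφχ : MemLp (fun x => φ x * χ x) ⊤ μ := hχ.mul' hφ
  have hψχ : MemLp (fun x => ψ x * χ x) ⊤ μ := hχ.mul' hψ
  have hA : MemLp (fun x => φ x * ψ x * χ x - a * (ψ x * χ x) - b * (φ x * χ x)
      - c * (φ x * ψ x)) ⊤ μ :=
    (((hχ.mul' hφψ).sub (hψχ.const_mul a)).sub (hφχ.const_mul b)).sub (hφψ.const_mul c)
  have hχw := (hmul χ hχ).const_mul (a * b)
  have hφw := (hmul φ hφ).const_mul (b * c)
  have hψw := (hmul ψ hψ).const_mul (c * a)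
  have hw' := hw.const_mul (a * b * c)
  have hB := (hχw.fun_add hφw).fun_add hψw
  calc ∫ x, (φ x - a) * (ψ x - b) * (χ x - c) * w x ∂μ
      = ∫ x, (φ x * ψ x * χ x - a * (ψ x * χ x) - b * (φ x * χ x) - c * (φ x * ψ x)) * w x
          + ((a * b * (χ x * w x) + b * c * (φ x * w x) + c * a * (ψ x * w x))
            - a * b * c * w x) ∂μ := integral_congr_ae (ae_of_all _ fun x => by ring)
    _ = _ := by
      rw [integral_add (hmul _ hA) (hB.sub' hw'), integral_sub hB hw',
        integral_add (hχw.fun_add hφw) hψw,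
        integral_add hχw hφw, integral_const_mul, integral_const_mul, integral_const_mul,
        integral_const_mul, ha, hb, hc, hw1]
      ring

end MeasureTheory

theorem L3_three_operator_uncertainty_general
    {Ω : Type*} [MeasurableSpace Ω] (μ : Measure Ω)
    (f φ ψ χ : Ω → ℝ)
    (hf : MemLp f 3 μ) (hf1 : ∫ x, (f x) ^ 3 ∂μ = 1)
    (hφb : MemLp φ ⊤ μ)
    (hψb : MemLp ψ ⊤ μ)
    (hχb : MemLp χ ⊤ μ)
    (a b c : ℝ)
    (ha : a = ∫ x, φ x * (f x) ^ 3 ∂μ)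
    (hb : b = ∫ x, ψ x * (f x) ^ 3 ∂μ)
    (hc : c = ∫ x, χ x * (f x) ^ 3 ∂μ)
    (Δφ Δψ Δχ : ℝ)
    (hΔφ : Δφ = (∫ x, |φ x * f x - a * f x| ^ 3 ∂μ) ^ ((1 : ℝ) / 3))
    (hΔψ : Δψ = (∫ x, |ψ x * f x - b * f x| ^ 3 ∂μ) ^ ((1 : ℝ) / 3))
    (hΔχ : Δχ = (∫ x, |χ x * f x - c * f x| ^ 3 ∂μ) ^ ((1 : ℝ) / 3)) :
    (1 / 27) * (Δφ + Δψ + Δχ) ^ 3 ≥ Δφ * Δψ * Δχ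
    ∧ Δφ * Δψ * Δχ
      ≥ |(∫ x, (φ x * ψ x * χ x - a * (ψ x * χ x) - b * (φ x * χ x) - c * (φ x * ψ x))
            * (f x) ^ 3 ∂μ) + 2 * a * b * c| := by
  have hdev : ∀ θ : Ω → ℝ, MemLp θ ⊤ μ → ∀ t : ℝ, MemLp (fun x => θ x * f x - t * f x) 3 μ :=
    fun θ hθ t => (hf.mul' hθ).sub (hf.const_mul t)
  have hΔφ0 : 0 ≤ Δφ := hΔφ ▸ by positivity
  have hΔψ0 : 0 ≤ Δψ := hΔψ ▸ by positivity
  have hΔχ0 : 0 ≤ Δχ := hΔχ ▸ by positivity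
  refine ⟨?_, ?_⟩
  · calc Δφ * Δψ * Δχ ≤ ((Δφ + Δψ + Δχ) / 3) ^ 3 :=
          mul_mul_le_arith_mean_pow_three hΔφ0 hΔψ0 hΔχ0
      _ = 1 / 27 * (Δφ + Δψ + Δχ) ^ 3 := by ring
  · rw [ge_iff_le, ← integral_sub_mul_sub_mul_sub_mul hf.integrable_pow_three hf1 hφb hψb hχb
      ha.symm hb.symm hc.symm, hΔφ, hΔψ, hΔχ]
    calc _ = |∫ x, (φ x * f x - a * f x) * (ψ x * f x - b * f x) * (χ x * f x - c * f x) ∂μ| := by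
          congr 2; funext x; ring
      _ ≤ _ := abs_integral_mul_mul_le (hdev φ hφb a) (hdev ψ hψb b) (hdev χ hχb c)

/-- **3-Heisenberg–Robertson–Schrödinger uncertainty principle on `L³(Ω, μ)`.**
For a state `f` with `∫ f³ = 1` and essentially bounded measurable multipliers
`φ, ψ, χ` with 3-expectations `a, b, c` and 3-uncertainties `Δ(φ), Δ(ψ), Δ(χ)`:
`(1/27)(Δ(φ)+Δ(ψ)+Δ(χ))³ ≥ Δ(φ)Δ(ψ)Δ(χ) ≥ |∫ (φψχ − aψχ − bφχ − cφψ) f³ dμ + 2abc|`. -/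
theorem L3_three_operator_uncertainty
    {Ω : Type*} [MeasurableSpace Ω] (μ : Measure Ω)
    (f φ ψ χ : Ω → ℝ)
    (hf : MemLp f 3 μ) (hf1 : ∫ x, (f x) ^ 3 ∂μ = 1)
    (hφm : Measurable φ) (hφb : MemLp φ ⊤ μ)
    (hψm : Measurable ψ) (hψb : MemLp ψ ⊤ μ)
    (hχm : Measurable χ) (hχb : MemLp χ ⊤ μ)
    (a b c : ℝ)
    (ha : a = ∫ x, φ x * (f x) ^ 3 ∂μ)
    (hb : b = ∫ x, ψ x * (f x) ^ 3 ∂μ)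
    (hc : c = ∫ x, χ x * (f x) ^ 3 ∂μ)
    (Δφ Δψ Δχ : ℝ)
    (hΔφ : Δφ = (∫ x, |φ x * f x - a * f x| ^ 3 ∂μ) ^ ((1 : ℝ) / 3))
    (hΔψ : Δψ = (∫ x, |ψ x * f x - b * f x| ^ 3 ∂μ) ^ ((1 : ℝ) / 3))
    (hΔχ : Δχ = (∫ x, |χ x * f x - c * f x| ^ 3 ∂μ) ^ ((1 : ℝ) / 3)) :
    (1 / 27) * (Δφ + Δψ + Δχ) ^ 3 ≥ Δφ * Δψ * Δχ
    ∧ Δφ * Δψ * Δχ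
      ≥ |(∫ x, (φ x * ψ x * χ x - a * (ψ x * χ x) - b * (φ x * χ x) - c * (φ x * ψ x))
            * (f x) ^ 3 ∂μ) + 2 * a * b * c| :=
  L3_three_operator_uncertainty_general μ f φ ψ χ hf hf1 hφb hψb hχb a b c ha hb hc Δφ Δψ Δχ hΔφ hΔψ
    hΔχ
end

section
/- (3-Heisenberg-Robertson-Schrödinger uncertainty principle on ℝⁿ.) Let n be a positive integer, let x ∈ ℝⁿ satisfy Σ_{j=1}^n x_j³ = 1, and let (a_j), (b_j), (c_j) be real n-tuples. Set a := Σ_j a_j x_j³, b := Σ_j b_j x_j³, c := Σ_j c_j x_j³, and Δ_A := (Σ_j |a_j x_j − a x_j|³)^{1/3}, Δ_B := (Σ_j |b_j x_j − b x_j|³)^{1/3}, Δ_C := (Σ_j |c_j x_j − c x_j|³)^{1/3}. Then (1/27)·(Δ_A + Δ_B + Δ_C)³ ≥ Δ_A·Δ_B·Δ_C ≥ | Σ_j (a_j b_j c_j − a·b_j c_j − b·a_j c_j − c·a_j b_j)·x_j³ + 2abc |. -/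
/-!
Since `Σ xⱼ³ = 1`, the weights `xⱼ³` turn `a, b, c` into means, and the quantity inside the
absolute value is the third mixed central moment `Σ (aⱼ - a)(bⱼ - b)(cⱼ - c) xⱼ³`, i.e. the
3-product of `Ax - ax`, `Bx - bx`, `Cx - cx`. Hölder's inequality for three functions with
exponents `3, 3, 3` bounds it by `ΔA ΔB ΔC`, and AM–GM bounds that by `((ΔA + ΔB + ΔC) / 3)³`.
-/

open Finset

theorem Real.abs_sum_mul_mul_le_Lp_mul_Lq_mul_Lr {ι : Type*} (s : Finset ι) (f g h : ι → ℝ)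
    {p q r t : ℝ} (hpt : p.HolderConjugate t) (hqrt : q.HolderTriple r t) :
    |∑ i ∈ s, f i * g i * h i| ≤
      (∑ i ∈ s, |f i| ^ p) ^ (1 / p) * (∑ i ∈ s, |g i| ^ q) ^ (1 / q) *
        (∑ i ∈ s, |h i| ^ r) ^ (1 / r) := by
  obtain ⟨hq, hr, ht⟩ := hqrt.all_pos
  have hG : 0 ≤ ∑ i ∈ s, |g i| ^ q := by positivity
  have hH : 0 ≤ ∑ i ∈ s, |h i| ^ r := by positivity
  have hgh : (∑ i ∈ s, |g i * h i| ^ t) ^ (1 / t) ≤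
      (∑ i ∈ s, |g i| ^ q) ^ (1 / q) * (∑ i ∈ s, |h i| ^ r) ^ (1 / r) := by
    calc (∑ i ∈ s, |g i * h i| ^ t) ^ (1 / t)
        ≤ ((∑ i ∈ s, |g i| ^ q) ^ (t / q) * (∑ i ∈ s, |h i| ^ r) ^ (t / r)) ^ (1 / t) := by
          gcongr
          exact Real.Lr_rpow_le_Lp_mul_Lq s g h hqrt
      _ = _ := by
          rw [Real.mul_rpow (by positivity) (by positivity), ← Real.rpow_mul hG,
            ← Real.rpow_mul hH]
          field_simp
  calc |∑ i ∈ s, f i * g i * h i|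
      ≤ ∑ i ∈ s, |f i| * |g i * h i| := by
        simpa only [mul_assoc, abs_mul] using abs_sum_le_sum_abs (fun i => f i * g i * h i) s
    _ ≤ (∑ i ∈ s, |f i| ^ p) ^ (1 / p) * (∑ i ∈ s, |g i * h i| ^ t) ^ (1 / t) := by
        simpa only [abs_abs] using
          Real.inner_le_Lp_mul_Lq s (fun i => |f i|) (fun i => |g i * h i|) hpt
    _ ≤ _ := by
        rw [mul_assoc]
        gcongr

theorem Real.abs_sum_mul_mul_le_L3_mul_L3_mul_L3 {ι : Type*} (s : Finset ι) (f g h : ι → ℝ) :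
    |∑ i ∈ s, f i * g i * h i| ≤
      (∑ i ∈ s, |f i| ^ 3) ^ ((1 : ℝ) / 3) * (∑ i ∈ s, |g i| ^ 3) ^ ((1 : ℝ) / 3) *
        (∑ i ∈ s, |h i| ^ 3) ^ ((1 : ℝ) / 3) := by
  have hpt : (3 : ℝ).HolderConjugate (3 / 2) := ⟨by norm_num, by norm_num, by norm_num⟩
  have hqrt : (3 : ℝ).HolderTriple 3 (3 / 2) := ⟨by norm_num, by norm_num, by norm_num⟩
  simpa only [← Real.rpow_natCast, Nat.cast_ofNat] using
    Real.abs_sum_mul_mul_le_Lp_mul_Lq_mul_Lr s f g h hpt hqrt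

theorem mul_mul_le_one_div_27_mul_add_add_pow_three {a b c : ℝ} (ha : 0 ≤ a) (hb : 0 ≤ b)
    (hc : 0 ≤ c) : a * b * c ≤ 1 / 27 * (a + b + c) ^ 3 := by
  nlinarith [mul_nonneg ha (sq_nonneg (b - c)), mul_nonneg hb (sq_nonneg (a - c)),
    mul_nonneg hc (sq_nonneg (a - b)),
    mul_nonneg (add_nonneg (add_nonneg ha hb) hc)
      (add_nonneg (add_nonneg (sq_nonneg (a - b)) (sq_nonneg (b - c))) (sq_nonneg (a - c)))]

/-- Expansion of a third mixed central moment for weights `w` of total mass `1`. -/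
theorem Finset.sum_sub_mul_sub_mul_sub_mul_eq {ι : Type*} (s : Finset ι) (w A B C : ι → ℝ)
    (hw : ∑ i ∈ s, w i = 1) :
    ∑ i ∈ s, (A i - ∑ j ∈ s, A j * w j) * (B i - ∑ j ∈ s, B j * w j) *
        (C i - ∑ j ∈ s, C j * w j) * w i =
      ∑ i ∈ s, (A i * B i * C i - (∑ j ∈ s, A j * w j) * (B i * C i)
          - (∑ j ∈ s, B j * w j) * (A i * C i) - (∑ j ∈ s, C j * w j) * (A i * B i)) * w i
        + 2 * (∑ j ∈ s, A j * w j) * (∑ j ∈ s, B j * w j) * (∑ j ∈ s, C j * w j) := by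
  set a := ∑ j ∈ s, A j * w j
  set b := ∑ j ∈ s, B j * w j
  set c := ∑ j ∈ s, C j * w j
  have key : ∀ i, (A i - a) * (B i - b) * (C i - c) * w i =
      (A i * B i * C i - a * (B i * C i) - b * (A i * C i) - c * (A i * B i)) * w i
        + (a * b * (C i * w i) + a * c * (B i * w i) + b * c * (A i * w i) - a * b * c * w i) :=
    fun i => by ring
  rw [sum_congr rfl fun i _ => key i, sum_add_distrib, sum_sub_distrib, sum_add_distrib,
    sum_add_distrib, ← mul_sum, ← mul_sum, ← mul_sum, ← mul_sum, hw]
  ring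

theorem Rn_three_operator_uncertainty_general
    (n : ℕ) (x A B C : Fin n → ℝ)
    (hx : ∑ j, (x j) ^ 3 = 1)
    (a b c : ℝ)
    (ha : a = ∑ j, A j * (x j) ^ 3)
    (hb : b = ∑ j, B j * (x j) ^ 3)
    (hc : c = ∑ j, C j * (x j) ^ 3)
    (ΔA ΔB ΔC : ℝ)
    (hΔA : ΔA = (∑ j, |A j * x j - a * x j| ^ 3) ^ ((1 : ℝ) / 3))
    (hΔB : ΔB = (∑ j, |B j * x j - b * x j| ^ 3) ^ ((1 : ℝ) / 3))
    (hΔC : ΔC = (∑ j, |C j * x j - c * x j| ^ 3) ^ ((1 : ℝ) / 3)) :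
    (1 / 27) * (ΔA + ΔB + ΔC) ^ 3 ≥ ΔA * ΔB * ΔC
    ∧ ΔA * ΔB * ΔC
      ≥ |(∑ j, (A j * B j * C j - a * (B j * C j) - b * (A j * C j) - c * (A j * B j))
            * (x j) ^ 3) + 2 * a * b * c| := by
  subst hΔA hΔB hΔC
  refine ⟨mul_mul_le_one_div_27_mul_add_add_pow_three (by positivity) (by positivity)
    (by positivity), ?_⟩
  have hcube : ∀ j, (A j * x j - a * x j) * (B j * x j - b * x j) * (C j * x j - c * x j) =
      (A j - a) * (B j - b) * (C j - c) * x j ^ 3 := fun j => by ring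
  calc |(∑ j, (A j * B j * C j - a * (B j * C j) - b * (A j * C j) - c * (A j * B j))
            * (x j) ^ 3) + 2 * a * b * c|
      = |∑ j, (A j * x j - a * x j) * (B j * x j - b * x j) * (C j * x j - c * x j)| := by
        rw [sum_congr rfl fun j _ => hcube j, ha, hb, hc,
          sum_sub_mul_sub_mul_sub_mul_eq _ _ _ _ _ hx]
    _ ≤ _ := Real.abs_sum_mul_mul_le_L3_mul_L3_mul_L3 _ _ _ _

/-- **3-Heisenberg–Robertson–Schrödinger uncertainty principle on `ℝⁿ`** (with the
`ℓ³`-norm and 3-product `⟨x, y, z⟩ = Σ xⱼyⱼzⱼ`), for diagonal operators given by real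
tuples `(aⱼ), (bⱼ), (cⱼ)` at a state `x` with `Σ xⱼ³ = 1`. -/
theorem Rn_three_operator_uncertainty
    (n : ℕ) (hn : 0 < n) (x A B C : Fin n → ℝ)
    (hx : ∑ j, (x j) ^ 3 = 1)
    (a b c : ℝ)
    (ha : a = ∑ j, A j * (x j) ^ 3)
    (hb : b = ∑ j, B j * (x j) ^ 3)
    (hc : c = ∑ j, C j * (x j) ^ 3)
    (ΔA ΔB ΔC : ℝ)
    (hΔA : ΔA = (∑ j, |A j * x j - a * x j| ^ 3) ^ ((1 : ℝ) / 3))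
    (hΔB : ΔB = (∑ j, |B j * x j - b * x j| ^ 3) ^ ((1 : ℝ) / 3))
    (hΔC : ΔC = (∑ j, |C j * x j - c * x j| ^ 3) ^ ((1 : ℝ) / 3)) :
    (1 / 27) * (ΔA + ΔB + ΔC) ^ 3 ≥ ΔA * ΔB * ΔC
    ∧ ΔA * ΔB * ΔC
      ≥ |(∑ j, (A j * B j * C j - a * (B j * C j) - b * (A j * C j) - c * (A j * B j))
            * (x j) ^ 3) + 2 * a * b * c| :=
  Rn_three_operator_uncertainty_general n x A B C hx a b c ha hb hc ΔA ΔB ΔC hΔA hΔB hΔC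
end

section
/- (3-Heisenberg-Robertson-Schrödinger uncertainty principle on ℓ³(ℕ).) Let x = (x_n) be a real sequence in ℓ³(ℕ) with Σ_{n=1}^∞ x_n³ = 1, and let (a_n), (b_n), (c_n) be bounded real sequences. Set a := Σ_n a_n x_n³, b := Σ_n b_n x_n³, c := Σ_n c_n x_n³, and Δ_A := (Σ_n |a_n x_n − a x_n|³)^{1/3}, Δ_B := (Σ_n |b_n x_n − b x_n|³)^{1/3}, Δ_C := (Σ_n |c_n x_n − c x_n|³)^{1/3}. Then (1/27)·(Δ_A + Δ_B + Δ_C)³ ≥ Δ_A·Δ_B·Δ_C ≥ | Σ_{n=1}^∞ (a_n b_n c_n − a·b_n c_n − b·a_n c_n − c·a_n b_n)·x_n³ + 2abc |, where all the series involved converge absolutely. -/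
lemma amgm3 (x y z : ℝ) (hx : 0 ≤ x) (hy : 0 ≤ y) (hz : 0 ≤ z) :
    x * y * z ≤ (x ^ 3 + y ^ 3 + z ^ 3) / 3 := by
  nlinarith [mul_nonneg hz (sq_nonneg (x - y)), mul_nonneg hx (sq_nonneg (y - z)),
    mul_nonneg hy (sq_nonneg (x - z)), mul_nonneg (mul_nonneg hx hy) hz]

lemma amgm3' (x y z : ℝ) (hx : 0 ≤ x) (hy : 0 ≤ y) (hz : 0 ≤ z) :
    27 * (x * y * z) ≤ (x + y + z) ^ 3 := by
  nlinarith [mul_nonneg hz (sq_nonneg (x - y)), mul_nonneg hx (sq_nonneg (y - z)),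
    mul_nonneg hy (sq_nonneg (x - z)), mul_nonneg (mul_nonneg hx hy) hz,
    mul_nonneg hx (sq_nonneg (x - y)), mul_nonneg hy (sq_nonneg (y - z)),
    mul_nonneg hz (sq_nonneg (x - z))]

lemma cube_rpow (S : ℝ) (hS : 0 ≤ S) : (S ^ ((1:ℝ)/3)) ^ 3 = S := by
  rw [← Real.rpow_natCast (S ^ ((1:ℝ)/3)) 3, ← Real.rpow_mul hS]
  norm_num

lemma holder3 (u v w : ℕ → ℝ) (hu : ∀ n, 0 ≤ u n) (hv : ∀ n, 0 ≤ v n) (hw : ∀ n, 0 ≤ w n)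
    (hus : Summable (fun n => u n ^ 3)) (hvs : Summable (fun n => v n ^ 3))
    (hws : Summable (fun n => w n ^ 3)) (huvw : Summable (fun n => u n * v n * w n)) :
    ∑' n, u n * v n * w n ≤
      (∑' n, u n ^ 3) ^ ((1:ℝ)/3) * (∑' n, v n ^ 3) ^ ((1:ℝ)/3) * (∑' n, w n ^ 3) ^ ((1:ℝ)/3) := by
  set Su := ∑' n, u n ^ 3 with hSu
  set Sv := ∑' n, v n ^ 3 with hSv
  set Sw := ∑' n, w n ^ 3 with hSw
  have hSu0 : 0 ≤ Su := tsum_nonneg fun n => pow_nonneg (hu n) 3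
  have hSv0 : 0 ≤ Sv := tsum_nonneg fun n => pow_nonneg (hv n) 3
  have hSw0 : 0 ≤ Sw := tsum_nonneg fun n => pow_nonneg (hw n) 3
  -- zero cases
  have hzero : ∀ (f g h : ℕ → ℝ), (∀ n, 0 ≤ f n) → Summable (fun n => f n ^ 3) →
      (∑' n, f n ^ 3) = 0 → (∀ n, f n * g n * h n = f n * g n * h n) → ∀ n, f n = 0 := by
    intro f g h hf hfs hf0 _ n
    have h1 : f n ^ 3 ≤ 0 := hf0 ▸ Summable.le_tsum hfs n (fun m _ => pow_nonneg (hf m) 3)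
    exact pow_eq_zero_iff (three_ne_zero) |>.mp (le_antisymm h1 (pow_nonneg (hf n) 3))
  rcases eq_or_lt_of_le hSu0 with h0 | hSup
  · have hz : ∀ n, u n = 0 := hzero u v w hu hus h0.symm (fun _ => rfl)
    have : ∀ n, u n * v n * w n = 0 := fun n => by rw [hz n]; ring
    rw [tsum_congr this, tsum_zero, ← h0, Real.zero_rpow (by norm_num)]
    simp
  rcases eq_or_lt_of_le hSv0 with h0 | hSvp
  · have hz : ∀ n, v n = 0 := hzero v u w hv hvs h0.symm (fun _ => rfl)
    have : ∀ n, u n * v n * w n = 0 := fun n => by rw [hz n]; ring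
    rw [tsum_congr this, tsum_zero, ← h0, Real.zero_rpow (by norm_num)]
    simp
  rcases eq_or_lt_of_le hSw0 with h0 | hSwp
  · have hz : ∀ n, w n = 0 := hzero w u v hw hws h0.symm (fun _ => rfl)
    have : ∀ n, u n * v n * w n = 0 := fun n => by rw [hz n]; ring
    rw [tsum_congr this, tsum_zero, ← h0, Real.zero_rpow (by norm_num)]
    simp
  set α := Su ^ ((1:ℝ)/3) with hα
  set β := Sv ^ ((1:ℝ)/3) with hβ
  set γ := Sw ^ ((1:ℝ)/3) with hγ
  have hαp : 0 < α := Real.rpow_pos_of_pos hSup _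
  have hβp : 0 < β := Real.rpow_pos_of_pos hSvp _
  have hγp : 0 < γ := Real.rpow_pos_of_pos hSwp _
  have hα3 : α ^ 3 = Su := cube_rpow Su hSu0
  have hβ3 : β ^ 3 = Sv := cube_rpow Sv hSv0
  have hγ3 : γ ^ 3 = Sw := cube_rpow Sw hSw0
  have key : ∀ n, u n * v n * w n ≤
      α * β * γ / 3 * (u n ^ 3 / Su + v n ^ 3 / Sv + w n ^ 3 / Sw) := by
    intro n
    have h := amgm3 (u n / α) (v n / β) (w n / γ)
      (div_nonneg (hu n) hαp.le) (div_nonneg (hv n) hβp.le) (div_nonneg (hw n) hγp.le)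
    have h2 := mul_le_mul_of_nonneg_left h (by positivity : (0:ℝ) ≤ α * β * γ)
    calc u n * v n * w n = α * β * γ * (u n / α * (v n / β) * (w n / γ)) := by
          field_simp
      _ ≤ α * β * γ * ((u n / α) ^ 3 + (v n / β) ^ 3 + (w n / γ) ^ 3) / 3 := by
          linarith
      _ = α * β * γ / 3 * (u n ^ 3 / Su + v n ^ 3 / Sv + w n ^ 3 / Sw) := by
          rw [div_pow, div_pow, div_pow, hα3, hβ3, hγ3]; ring
  have hsum2 : Summable (fun n => α * β * γ / 3 * (u n ^ 3 / Su + v n ^ 3 / Sv + w n ^ 3 / Sw)) :=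
    (((hus.div_const Su).add (hvs.div_const Sv)).add (hws.div_const Sw)).mul_left _
  have := Summable.tsum_le_tsum key huvw hsum2
  calc ∑' n, u n * v n * w n ≤ _ := this
    _ = α * β * γ / 3 * (Su / Su + Sv / Sv + Sw / Sw) := by
        rw [tsum_mul_left]
        congr 1
        rw [Summable.tsum_add ((hus.div_const Su).add (hvs.div_const Sv)) (hws.div_const Sw),
          Summable.tsum_add (hus.div_const Su) (hvs.div_const Sv),
          tsum_div_const, tsum_div_const, tsum_div_const]
    _ = α * β * γ := by
        rw [div_self hSup.ne', div_self hSvp.ne', div_self hSwp.ne']; ring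


set_option maxHeartbeats 1000000 in
/-- **3-Heisenberg–Robertson–Schrödinger uncertainty principle on `ℓ³(ℕ)`.**
For a state `x ∈ ℓ³(ℕ)` with `Σ xₙ³ = 1` and bounded real sequences `(aₙ), (bₙ), (cₙ)`
(acting as multiplication operators), with 3-expectations `a, b, c` and 3-uncertainties
`Δ_A, Δ_B, Δ_C`:
`(1/27)(Δ_A + Δ_B + Δ_C)³ ≥ Δ_A·Δ_B·Δ_C ≥ |Σₙ (aₙbₙcₙ − a bₙcₙ − b aₙcₙ − c aₙbₙ) xₙ³ + 2abc|`,
where all the series involved converge absolutely. -/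
theorem l3_three_operator_uncertainty
    (x A B C : ℕ → ℝ)
    (hx3 : Summable (fun n => |x n| ^ 3))
    (hx : ∑' n, (x n) ^ 3 = 1)
    (hA : ∃ M : ℝ, ∀ n, |A n| ≤ M)
    (hB : ∃ M : ℝ, ∀ n, |B n| ≤ M)
    (hC : ∃ M : ℝ, ∀ n, |C n| ≤ M)
    (a b c : ℝ)
    (ha : a = ∑' n, A n * (x n) ^ 3)
    (hb : b = ∑' n, B n * (x n) ^ 3)
    (hc : c = ∑' n, C n * (x n) ^ 3)
    (ΔA ΔB ΔC : ℝ)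
    (hΔA : ΔA = (∑' n, |A n * x n - a * x n| ^ 3) ^ ((1 : ℝ) / 3))
    (hΔB : ΔB = (∑' n, |B n * x n - b * x n| ^ 3) ^ ((1 : ℝ) / 3))
    (hΔC : ΔC = (∑' n, |C n * x n - c * x n| ^ 3) ^ ((1 : ℝ) / 3)) :
    Summable (fun n => |A n * (x n) ^ 3|)
    ∧ Summable (fun n => |B n * (x n) ^ 3|)
    ∧ Summable (fun n => |C n * (x n) ^ 3|)
    ∧ Summable (fun n => |A n * x n - a * x n| ^ 3)
    ∧ Summable (fun n => |B n * x n - b * x n| ^ 3)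
    ∧ Summable (fun n => |C n * x n - c * x n| ^ 3)
    ∧ Summable (fun n =>
        |(A n * B n * C n - a * (B n * C n) - b * (A n * C n) - c * (A n * B n)) * (x n) ^ 3|)
    ∧ (1 / 27) * (ΔA + ΔB + ΔC) ^ 3 ≥ ΔA * ΔB * ΔC
    ∧ ΔA * ΔB * ΔC
      ≥ |(∑' n, (A n * B n * C n - a * (B n * C n) - b * (A n * C n) - c * (A n * B n))
            * (x n) ^ 3) + 2 * a * b * c| := by
  obtain ⟨MA, hMA⟩ := hA
  obtain ⟨MB, hMB⟩ := hB
  obtain ⟨MC, hMC⟩ := hC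
  -- generic: bounded coefficient times x^3 is absolutely summable
  have habs : ∀ (D : ℕ → ℝ) (M : ℝ), (∀ n, |D n| ≤ M) →
      Summable (fun n => |D n * (x n) ^ 3|) := by
    intro D M hM
    apply Summable.of_nonneg_of_le (fun n => abs_nonneg _) (fun n => ?_) (hx3.mul_left M)
    rw [abs_mul, abs_pow]
    exact mul_le_mul_of_nonneg_right (hM n) (by positivity)
  have hsA := habs A MA hMA
  have hsB := habs B MB hMB
  have hsC := habs C MC hMC
  -- cube summabilities for the uncertainties
  have hcube : ∀ (D : ℕ → ℝ) (M d : ℝ), (∀ n, |D n| ≤ M) →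
      Summable (fun n => |D n * x n - d * x n| ^ 3) := by
    intro D M d hM
    apply Summable.of_nonneg_of_le (fun n => by positivity) (fun n => ?_)
      (hx3.mul_left ((M + |d|) ^ 3))
    have h1 : |D n * x n - d * x n| ≤ (M + |d|) * |x n| := by
      have : D n * x n - d * x n = (D n - d) * x n := by ring
      rw [this, abs_mul]
      apply mul_le_mul_of_nonneg_right _ (abs_nonneg _)
      calc |D n - d| ≤ |D n| + |d| := abs_sub _ _
        _ ≤ M + |d| := by linarith [hM n]
    calc |D n * x n - d * x n| ^ 3 ≤ ((M + |d|) * |x n|) ^ 3 :=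
          pow_le_pow_left₀ (abs_nonneg _) h1 3
      _ = (M + |d|) ^ 3 * |x n| ^ 3 := by ring
  have hsA3 := hcube A MA a hMA
  have hsB3 := hcube B MB b hMB
  have hsC3 := hcube C MC c hMC
  -- bounds are nonneg
  have hMA0 : 0 ≤ MA := le_trans (abs_nonneg _) (hMA 0)
  have hMB0 : 0 ≤ MB := le_trans (abs_nonneg _) (hMB 0)
  have hMC0 : 0 ≤ MC := le_trans (abs_nonneg _) (hMC 0)
  -- the combined coefficient is bounded
  have hQbd : ∀ n, |A n * B n * C n - a * (B n * C n) - b * (A n * C n) - c * (A n * B n)|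
      ≤ MA * MB * MC + |a| * (MB * MC) + |b| * (MA * MC) + |c| * (MA * MB) := by
    intro n
    have h1 : |A n * B n * C n| ≤ MA * MB * MC := by
      rw [abs_mul, abs_mul]
      gcongr <;> [exact hMA n; exact hMB n; exact hMC n]
    have h2 : |a * (B n * C n)| ≤ |a| * (MB * MC) := by
      rw [abs_mul, abs_mul]
      gcongr <;> [exact hMB n; exact hMC n]
    have h3 : |b * (A n * C n)| ≤ |b| * (MA * MC) := by
      rw [abs_mul, abs_mul]
      gcongr <;> [exact hMA n; exact hMC n]
    have h4 : |c * (A n * B n)| ≤ |c| * (MA * MB) := by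
      rw [abs_mul, abs_mul]
      gcongr <;> [exact hMA n; exact hMB n]
    calc |A n * B n * C n - a * (B n * C n) - b * (A n * C n) - c * (A n * B n)|
        ≤ |A n * B n * C n| + |a * (B n * C n)| + |b * (A n * C n)| + |c * (A n * B n)| := by
          have := abs_sub (A n * B n * C n - a * (B n * C n) - b * (A n * C n)) (c * (A n * B n))
          have := abs_sub (A n * B n * C n - a * (B n * C n)) (b * (A n * C n))
          have := abs_sub (A n * B n * C n) (a * (B n * C n))
          linarith
      _ ≤ _ := by linarith
  have hsQ := habs _ _ hQbd
  refine ⟨hsA, hsB, hsC, hsA3, hsB3, hsC3, hsQ, ?_, ?_⟩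
  · -- AM-GM part
    have hΔA0 : 0 ≤ ΔA := hΔA ▸ Real.rpow_nonneg (tsum_nonneg fun n => by positivity) _
    have hΔB0 : 0 ≤ ΔB := hΔB ▸ Real.rpow_nonneg (tsum_nonneg fun n => by positivity) _
    have hΔC0 : 0 ≤ ΔC := hΔC ▸ Real.rpow_nonneg (tsum_nonneg fun n => by positivity) _
    have := amgm3' ΔA ΔB ΔC hΔA0 hΔB0 hΔC0
    linarith
  · -- main inequality
    set u : ℕ → ℝ := fun n => |A n * x n - a * x n| with hu
    set v : ℕ → ℝ := fun n => |B n * x n - b * x n| with hv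
    set w : ℕ → ℝ := fun n => |C n * x n - c * x n| with hw
    have hg : Summable (fun n => (x n) ^ 3) :=
      Summable.of_abs (by simpa [abs_pow] using hx3)
    have hgD : ∀ (D : ℕ → ℝ) (M : ℝ), (∀ n, |D n| ≤ M) →
        Summable (fun n => D n * (x n) ^ 3) := fun D M hM => (habs D M hM).of_abs
    -- the expansion identity
    have hP : ∀ n, (A n - a) * (B n - b) * (C n - c) * (x n) ^ 3 =
        (A n * B n * C n - a * (B n * C n) - b * (A n * C n) - c * (A n * B n)) * (x n) ^ 3
        + (a * b * (C n * (x n) ^ 3) + a * c * (B n * (x n) ^ 3)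
          + b * c * (A n * (x n) ^ 3) - a * b * c * (x n) ^ 3) := by
      intro n; ring
    have hQs : Summable (fun n =>
        (A n * B n * C n - a * (B n * C n) - b * (A n * C n) - c * (A n * B n)) * (x n) ^ 3) :=
      hsQ.of_abs
    have hRs : Summable (fun n => a * b * (C n * (x n) ^ 3) + a * c * (B n * (x n) ^ 3)
        + b * c * (A n * (x n) ^ 3) - a * b * c * (x n) ^ 3) :=
      ((((hgD C MC hMC).mul_left (a*b)).add ((hgD B MB hMB).mul_left (a*c))).add
        ((hgD A MA hMA).mul_left (b*c))).sub (hg.mul_left (a*b*c))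
    have hTsum : ∑' n, (A n - a) * (B n - b) * (C n - c) * (x n) ^ 3 =
        (∑' n, (A n * B n * C n - a * (B n * C n) - b * (A n * C n) - c * (A n * B n))
          * (x n) ^ 3) + 2 * a * b * c := by
      rw [tsum_congr hP, Summable.tsum_add hQs hRs]
      congr 1
      rw [Summable.tsum_sub ((((hgD C MC hMC).mul_left (a*b)).add
          ((hgD B MB hMB).mul_left (a*c))).add ((hgD A MA hMA).mul_left (b*c)))
          (hg.mul_left (a*b*c))]
      rw [Summable.tsum_add (((hgD C MC hMC).mul_left (a*b)).add ((hgD B MB hMB).mul_left (a*c)))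
          ((hgD A MA hMA).mul_left (b*c)),
        Summable.tsum_add ((hgD C MC hMC).mul_left (a*b)) ((hgD B MB hMB).mul_left (a*c)),
        tsum_mul_left, tsum_mul_left, tsum_mul_left, tsum_mul_left,
        ← hc, ← hb, ← ha, hx]
      ring
    -- |P n| = u n * v n * w n
    have habsP : ∀ n, |(A n - a) * (B n - b) * (C n - c) * (x n) ^ 3| = u n * v n * w n := by
      intro n
      have : (A n - a) * (B n - b) * (C n - c) * (x n) ^ 3 =
          ((A n * x n - a * x n) * (B n * x n - b * x n)) * (C n * x n - c * x n) := by ring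
      rw [this, abs_mul, abs_mul]
    -- summability of u*v*w
    have huvw : Summable (fun n => u n * v n * w n) := by
      apply Summable.of_nonneg_of_le (fun n => by positivity) (fun n => ?_)
        (hx3.mul_left ((MA + |a|) * ((MB + |b|) * (MC + |c|))))
      have hlin : ∀ (D : ℕ → ℝ) (M d : ℝ), (∀ m, |D m| ≤ M) →
          |D n * x n - d * x n| ≤ (M + |d|) * |x n| := by
        intro D M d hM
        have h0 : D n * x n - d * x n = (D n - d) * x n := by ring
        rw [h0, abs_mul]
        apply mul_le_mul_of_nonneg_right _ (abs_nonneg _)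
        calc |D n - d| ≤ |D n| + |d| := abs_sub _ _
          _ ≤ M + |d| := by linarith [hM n]
      calc u n * v n * w n
          ≤ ((MA + |a|) * |x n|) * (((MB + |b|) * |x n|) * ((MC + |c|) * |x n|)) := by
            rw [mul_assoc]
            apply mul_le_mul (hlin A MA a hMA) (mul_le_mul (hlin B MB b hMB)
              (hlin C MC c hMC) (abs_nonneg _) (by positivity)) (by positivity) (by positivity)
        _ = (MA + |a|) * ((MB + |b|) * (MC + |c|)) * |x n| ^ 3 := by ring
    have hPs : Summable (fun n => (A n - a) * (B n - b) * (C n - c) * (x n) ^ 3) :=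
      Summable.of_abs ((huvw.congr (fun n => (habsP n).symm)))
    have hnorm : |∑' n, (A n - a) * (B n - b) * (C n - c) * (x n) ^ 3|
        ≤ ∑' n, u n * v n * w n := by
      calc |∑' n, (A n - a) * (B n - b) * (C n - c) * (x n) ^ 3|
          ≤ ∑' n, |(A n - a) * (B n - b) * (C n - c) * (x n) ^ 3| := by
            have hsabs : Summable fun n => ‖(A n - a) * (B n - b) * (C n - c) * (x n) ^ 3‖ := by
              simp only [Real.norm_eq_abs]
              exact huvw.congr fun n => (habsP n).symm
            have h := norm_tsum_le_tsum_norm hsabs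
            simp only [Real.norm_eq_abs] at h
            exact h
        _ = ∑' n, u n * v n * w n := tsum_congr habsP
    have hH := holder3 u v w (fun n => abs_nonneg _) (fun n => abs_nonneg _)
      (fun n => abs_nonneg _) (by simpa [hu] using hsA3) (by simpa [hv] using hsB3)
      (by simpa [hw] using hsC3) huvw
    rw [ge_iff_le, ← hTsum]
    calc |∑' n, (A n - a) * (B n - b) * (C n - c) * (x n) ^ 3|
        ≤ ∑' n, u n * v n * w n := hnorm
      _ ≤ _ := hH
      _ = ΔA * ΔB * ΔC := by rw [hΔA, hΔB, hΔC]
end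

section
/- Let x = (x_n) be a real sequence in ℓ³(ℕ) with Σ_{n=1}^∞ x_n³ = 1, and let (a_n), (b_n), (c_n) be bounded real sequences. Set a := Σ_n a_n x_n³, b := Σ_n b_n x_n³, c := Σ_n c_n x_n³. Then (Σ_n |a_n x_n − a x_n|³)^{1/3} · (Σ_n |b_n x_n − b x_n|³)^{1/3} · (Σ_n |c_n x_n − c x_n|³)^{1/3} ≥ | Σ_{n=1}^∞ (a_n − a)(b_n − b)(c_n − c)·x_n³ |, where the series on the right converges absolutely. -/
/-!
Writing `uₙ = (aₙ - a) xₙ`, `vₙ = (bₙ - b) xₙ`, `wₙ = (cₙ - c) xₙ`, the right-hand side is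
`|Σ uₙ vₙ wₙ|` and the left-hand side is `‖u‖₃ ‖v‖₃ ‖w‖₃`, so the claim is Hölder's inequality
for three sequences with exponents `3, 3, 3`. That follows from the two-term inequality twice:
`‖v w‖_{3/2} ≤ ‖v‖₃ ‖w‖₃` and `Σ |u| |v w| ≤ ‖u‖₃ ‖v w‖_{3/2}`.
-/

open Real

section Holder

variable {ι : Type*} {f g h : ι → ℝ} {p q r : ℝ}

theorem summable_and_inner_le_Lp_mul_Lq_mul_Lr_tsum_of_nonneg
    (hp : 0 < p) (hq : 0 < q) (hr : 0 < r) (hpqr : p⁻¹ + q⁻¹ + r⁻¹ = 1)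
    (hf : ∀ i, 0 ≤ f i) (hg : ∀ i, 0 ≤ g i) (hh : ∀ i, 0 ≤ h i)
    (hf_sum : Summable fun i => f i ^ p) (hg_sum : Summable fun i => g i ^ q)
    (hh_sum : Summable fun i => h i ^ r) :
    (Summable fun i => f i * g i * h i) ∧
      ∑' i, f i * g i * h i ≤
        (∑' i, f i ^ p) ^ (1 / p) * (∑' i, g i ^ q) ^ (1 / q) * (∑' i, h i ^ r) ^ (1 / r) := by
  -- Hölder for `g, h` lands in `L^s` with `s⁻¹ = q⁻¹ + r⁻¹`, the exponent conjugate to `p`.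
  set s := (q⁻¹ + r⁻¹)⁻¹
  have hqrs : q.HolderTriple r s := ⟨(inv_inv _).symm, hq, hr⟩
  have hps : p.HolderConjugate s := ⟨by rw [inv_inv, ← add_assoc, hpqr, inv_one], hp, hqrs.pos'⟩
  have hgh : ∀ i, 0 ≤ g i * h i := fun i => mul_nonneg (hg i) (hh i)
  have hgh_sum := summable_Lr_of_Lp_Lq_of_nonneg hqrs hg hh hg_sum hh_sum
  obtain ⟨hsum, hle⟩ := summable_and_inner_le_Lp_mul_Lq_tsum_of_nonneg hps hf hgh hf_sum hgh_sum
  simp only [← mul_assoc] at hsum hle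
  refine ⟨hsum, hle.trans ?_⟩
  rw [mul_assoc]
  exact mul_le_mul_of_nonneg_left (Lr_le_Lp_mul_Lq_tsum_of_nonneg hqrs hg hh hg_sum hh_sum)
    (rpow_nonneg (tsum_nonneg fun i => rpow_nonneg (hf i) p) _)

end Holder

section L3

variable {ι : Type*}

theorem summable_and_abs_tsum_mul_mul_le_L3 {u v w : ι → ℝ}
    (hu : Summable fun i => |u i| ^ 3) (hv : Summable fun i => |v i| ^ 3)
    (hw : Summable fun i => |w i| ^ 3) :
    (Summable fun i => |u i * v i * w i|) ∧
      |∑' i, u i * v i * w i| ≤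
        (∑' i, |u i| ^ 3) ^ ((1 : ℝ) / 3) * (∑' i, |v i| ^ 3) ^ ((1 : ℝ) / 3)
          * (∑' i, |w i| ^ 3) ^ ((1 : ℝ) / 3) := by
  simp only [← rpow_ofNat] at hu hv hw ⊢
  obtain ⟨hsum, hle⟩ := summable_and_inner_le_Lp_mul_Lq_mul_Lr_tsum_of_nonneg three_pos three_pos
    three_pos (by norm_num) (fun i => abs_nonneg (u i)) (fun i => abs_nonneg (v i))
    (fun i => abs_nonneg (w i)) hu hv hw
  simp only [← abs_mul] at hsum hle
  refine ⟨hsum, le_trans ?_ hle⟩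
  simpa only [Real.norm_eq_abs] using norm_tsum_le_tsum_norm (f := fun i => u i * v i * w i) hsum

theorem summable_abs_mul_pow_of_bounded {u x : ι → ℝ} {p : ℕ} (hu : ∃ M, ∀ i, |u i| ≤ M)
    (hx : Summable fun i => |x i| ^ p) : Summable fun i => |u i * x i| ^ p := by
  obtain ⟨M, hM⟩ := hu
  refine (hx.mul_left (M ^ p)).of_nonneg_of_le (fun i => by positivity) fun i => ?_
  rw [abs_mul, mul_pow]
  gcongr
  exact hM i

end L3

theorem l3_uncertainty_product_lower_bound_general
    (x A B C : ℕ → ℝ)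
    (hx3 : Summable (fun n => |x n| ^ 3))
    (hA : ∃ M : ℝ, ∀ n, |A n| ≤ M)
    (hB : ∃ M : ℝ, ∀ n, |B n| ≤ M)
    (hC : ∃ M : ℝ, ∀ n, |C n| ≤ M)
    (a b c : ℝ) :
    Summable (fun n => |(A n - a) * (B n - b) * (C n - c) * (x n) ^ 3|)
    ∧ (∑' n, |A n * x n - a * x n| ^ 3) ^ ((1 : ℝ) / 3)
        * (∑' n, |B n * x n - b * x n| ^ 3) ^ ((1 : ℝ) / 3)
        * (∑' n, |C n * x n - c * x n| ^ 3) ^ ((1 : ℝ) / 3)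
      ≥ |∑' n, (A n - a) * (B n - b) * (C n - c) * (x n) ^ 3| := by
  have shift {D : ℕ → ℝ} (hD : ∃ M : ℝ, ∀ n, |D n| ≤ M) (d : ℝ) :
      Summable fun n => |(D n - d) * x n| ^ 3 := by
    obtain ⟨M, hM⟩ := hD
    exact summable_abs_mul_pow_of_bounded
      ⟨M + |d|, fun n => (abs_sub _ _).trans (by gcongr; exact hM n)⟩ hx3
  have factor (D : ℕ → ℝ) (d : ℝ) (n : ℕ) : D n * x n - d * x n = (D n - d) * x n :=
    (sub_mul _ _ _).symm
  have regroup (n : ℕ) : (A n - a) * (B n - b) * (C n - c) * x n ^ 3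
      = (A n - a) * x n * ((B n - b) * x n) * ((C n - c) * x n) := by ring
  simp only [factor, regroup]
  exact summable_and_abs_tsum_mul_mul_le_L3 (shift hA a) (shift hB b) (shift hC c)

/-- On `ℓ³(ℕ)`: for a state `x` with `Σ xₙ³ = 1` and bounded real sequences
`(aₙ), (bₙ), (cₙ)` with 3-expectations `a, b, c`,
`(Σ |aₙxₙ − a xₙ|³)^{1/3}·(Σ |bₙxₙ − b xₙ|³)^{1/3}·(Σ |cₙxₙ − c xₙ|³)^{1/3}
  ≥ |Σₙ (aₙ − a)(bₙ − b)(cₙ − c) xₙ³|`,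
where the series on the right converges absolutely. -/
theorem l3_uncertainty_product_lower_bound
    (x A B C : ℕ → ℝ)
    (hx3 : Summable (fun n => |x n| ^ 3))
    (hx : ∑' n, (x n) ^ 3 = 1)
    (hA : ∃ M : ℝ, ∀ n, |A n| ≤ M)
    (hB : ∃ M : ℝ, ∀ n, |B n| ≤ M)
    (hC : ∃ M : ℝ, ∀ n, |C n| ≤ M)
    (a b c : ℝ)
    (ha : a = ∑' n, A n * (x n) ^ 3)
    (hb : b = ∑' n, B n * (x n) ^ 3)
    (hc : c = ∑' n, C n * (x n) ^ 3) :
    Summable (fun n => |(A n - a) * (B n - b) * (C n - c) * (x n) ^ 3|)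
    ∧ (∑' n, |A n * x n - a * x n| ^ 3) ^ ((1 : ℝ) / 3)
        * (∑' n, |B n * x n - b * x n| ^ 3) ^ ((1 : ℝ) / 3)
        * (∑' n, |C n * x n - c * x n| ^ 3) ^ ((1 : ℝ) / 3)
      ≥ |∑' n, (A n - a) * (B n - b) * (C n - c) * (x n) ^ 3| :=
  l3_uncertainty_product_lower_bound_general x A B C hx3 hA hB hC a b c
end
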